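/- arXiv:1902.07671 — 4 statements merged into one kernel-verified Lean document; each statement's English description precedes it below -/
import Mathlib

section
/- Let (Ω, μ) be a σ-finite measure space, K : Ω → ℂ measurable, A : Ω → GL(n,ℝ) measurable with ∫ |K(u)| |det A(u)|^(-1/2) dμ(u) < ∞. Then the Hausdorff operator (Hf)(x) = ∫_Ω K(u) f(A(u)x) dμ(u) is bounded on L²(ℝⁿ) with norm at most ∫_Ω |K(u)| |det A(u)|^(-1/2) dμ(u). -/
/-!
By Minkowski's integral inequality, `‖H f‖₂ ≤ ∫ |K u| ‖f (A u ·)‖₂ dμ(u)`, and the linear change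
of variables `y = A u x` gives `‖f (A u ·)‖₂ = |det A u|^(-1/2) ‖f‖₂`. For the exponent 2,
Minkowski's inequality comes from expanding the square of the inner integral, integrating in `x`
first (Tonelli) and applying Cauchy–Schwarz. Since every `A u` is invertible, precomposition with
`A u` preserves null sets, so `H` is well defined on classes in `L²`; the same `L²` bound makes
the defining integral converge for a.e. `x`, which gives additivity.
-/

open MeasureTheory ENNReal Matrix

section Minkowski

variable {Ω X : Type*} [MeasurableSpace Ω] [MeasurableSpace X] {μ : Measure Ω} {ν : Measure X}

theorem eLpNorm_two_sq_eq_lintegral (f : X → ℝ≥0∞) :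
    eLpNorm f 2 ν ^ 2 = ∫⁻ x, f x ^ 2 ∂ν := by
  simpa [enorm_eq_self] using eLpNorm_nnreal_pow_eq_lintegral (μ := ν) (f := f) (p := 2) two_ne_zero

theorem lintegral_mul_le_eLpNorm_two_mul_eLpNorm_two {f g : X → ℝ≥0∞} (hf : AEMeasurable f ν)
    (hg : AEMeasurable g ν) : ∫⁻ x, f x * g x ∂ν ≤ eLpNorm f 2 ν * eLpNorm g 2 ν := by
  simpa [eLpNorm_eq_lintegral_rpow_enorm_toReal two_ne_zero ofNat_ne_top, enorm_eq_self]
    using ENNReal.lintegral_mul_le_Lp_mul_Lq ν Real.HolderConjugate.two_two hf hg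

theorem eLpNorm_two_lintegral_le [SFinite μ] [SFinite ν] {F : Ω → X → ℝ≥0∞}
    (hF : Measurable (Function.uncurry F)) :
    eLpNorm (fun x => ∫⁻ u, F u x ∂μ) 2 ν ≤ ∫⁻ u, eLpNorm (F u) 2 ν ∂μ := by
  have hFx : ∀ x, Measurable fun u => F u x := fun x => hF.of_uncurry_right
  have hFu : ∀ u, Measurable (F u) := fun u => hF.of_uncurry_left
  have hsq : ∀ x, (∫⁻ u, F u x ∂μ) ^ 2 = ∫⁻ u, ∫⁻ v, F u x * F v x ∂μ ∂μ := fun x => by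
    simp_rw [sq, ← lintegral_mul_const _ (hFx x), ← lintegral_const_mul _ (hFx x)]
  have hN : Measurable fun u => eLpNorm (F u) 2 ν := by
    simp_rw [eLpNorm_eq_lintegral_rpow_enorm_toReal two_ne_zero ofNat_ne_top, enorm_eq_self]
    exact ((hF.pow_const _).lintegral_prod_right).pow_const _
  refine (ENNReal.pow_le_pow_left_iff two_ne_zero).1 ?_
  calc eLpNorm (fun x => ∫⁻ u, F u x ∂μ) 2 ν ^ 2
      = ∫⁻ x, ∫⁻ u, ∫⁻ v, F u x * F v x ∂μ ∂μ ∂ν := by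
        rw [eLpNorm_two_sq_eq_lintegral]; simp_rw [hsq]
    _ = ∫⁻ u, ∫⁻ v, ∫⁻ x, F u x * F v x ∂ν ∂μ ∂μ := by
        rw [lintegral_lintegral_swap (by fun_prop)]
        exact lintegral_congr fun u => lintegral_lintegral_swap (by fun_prop)
    _ ≤ ∫⁻ u, ∫⁻ v, eLpNorm (F u) 2 ν * eLpNorm (F v) 2 ν ∂μ ∂μ := by
        gcongr with u v
        exact lintegral_mul_le_eLpNorm_two_mul_eLpNorm_two (hFu u).aemeasurable
          (hFu v).aemeasurable
    _ = (∫⁻ u, eLpNorm (F u) 2 ν ∂μ) ^ 2 := by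
        simp_rw [lintegral_const_mul _ hN, lintegral_mul_const _ hN, sq]

theorem eLpNorm_two_integral_le {E : Type*} [NormedAddCommGroup E] [NormedSpace ℝ E]
    [SFinite μ] [SFinite ν] {F : Ω → X → E} (hF : StronglyMeasurable (Function.uncurry F)) :
    eLpNorm (fun x => ∫ u, F u x ∂μ) 2 ν ≤ ∫⁻ u, eLpNorm (F u) 2 ν ∂μ :=
  calc eLpNorm (fun x => ∫ u, F u x ∂μ) 2 ν
      ≤ eLpNorm (fun x => ∫⁻ u, ‖F u x‖ₑ ∂μ) 2 ν :=
        eLpNorm_mono_enorm fun x =>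
          (enorm_integral_le_lintegral_enorm _).trans_eq (enorm_eq_self _).symm
    _ ≤ ∫⁻ u, eLpNorm (F u) 2 ν ∂μ := by
        simpa only [eLpNorm_enorm] using
          eLpNorm_two_lintegral_le (F := fun u x => ‖F u x‖ₑ) hF.enorm

theorem ae_integrable_of_lintegral_eLpNorm_two_ne_top {E : Type*} [NormedAddCommGroup E]
    [SFinite μ] [SFinite ν] {F : Ω → X → E} (hF : StronglyMeasurable (Function.uncurry F))
    (hfin : ∫⁻ u, eLpNorm (F u) 2 ν ∂μ ≠ ∞) : ∀ᵐ x ∂ν, Integrable (fun u => F u x) μ := by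
  have hΦ : Measurable fun x => ∫⁻ u, ‖F u x‖ₑ ∂μ :=
    (hF.enorm.comp measurable_swap).lintegral_prod_right'
  have hΦ2 : ∫⁻ x, (∫⁻ u, ‖F u x‖ₑ ∂μ) ^ 2 ∂ν ≠ ∞ := by
    rw [← eLpNorm_two_sq_eq_lintegral]
    refine pow_ne_top (ne_top_of_le_ne_top hfin ?_)
    simpa only [eLpNorm_enorm] using
      eLpNorm_two_lintegral_le (F := fun u x => ‖F u x‖ₑ) hF.enorm
  filter_upwards [ae_lt_top (hΦ.pow_const 2) hΦ2] with x hx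
  exact ⟨(hF.comp_measurable measurable_prodMk_right).aestronglyMeasurable,
    by simpa [HasFiniteIntegral] using hx⟩

end Minkowski

namespace Matrix

variable {ι : Type*} [Fintype ι] [DecidableEq ι] {M : Matrix ι ι ℝ}

theorem map_mulVec_volume (hM : M.det ≠ 0) :
    Measure.map (M *ᵥ ·) volume
      = ENNReal.ofReal |M.det|⁻¹ • (volume : Measure (ι → ℝ)) := by
  have hcoe : (M *ᵥ ·) = ⇑(toLin' M) := funext fun x => (toLin'_apply M x).symm
  rw [hcoe, Real.map_matrix_volume_pi_eq_smul_volume_pi hM, abs_inv]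

theorem quasiMeasurePreserving_mulVec (hM : M.det ≠ 0) :
    Measure.QuasiMeasurePreserving (M *ᵥ ·) (volume : Measure (ι → ℝ)) volume :=
  ⟨by fun_prop, by rw [map_mulVec_volume hM]; exact Measure.smul_absolutelyContinuous⟩

theorem eLpNorm_comp_mulVec {E : Type*} [NormedAddCommGroup E] (hM : M.det ≠ 0)
    {p : ℝ≥0∞} (hp : p ≠ ∞) {g : (ι → ℝ) → E} (hg : AEStronglyMeasurable g volume) :
    eLpNorm (fun x => g (M *ᵥ x)) p volume
      = ENNReal.ofReal (|M.det| ^ (-1 / p.toReal)) * eLpNorm g p volume := by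
  have hg' : AEStronglyMeasurable g (Measure.map (M *ᵥ ·) volume) := by
    rw [map_mulVec_volume hM]; exact hg.smul_measure _
  rw [← Function.comp_def, ← eLpNorm_map_measure hg' (by fun_prop), map_mulVec_volume hM,
    eLpNorm_smul_measure_of_ne_top hp, smul_eq_mul, ENNReal.ofReal_rpow_of_nonneg, Real.inv_rpow,
    ← Real.rpow_neg, ENNReal.toReal_div, ENNReal.toReal_one, neg_div]
  all_goals positivity

end Matrix

theorem MeasureTheory.Lp.exists_continuousLinearMap_of_eLpNorm_le {α E 𝕜 : Type*}
    [MeasurableSpace α] {μ : Measure α} {p : ℝ≥0∞} [Fact (1 ≤ p)] [NontriviallyNormedField 𝕜]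
    [NormedAddCommGroup E] [NormedSpace 𝕜 E] (T : (α → E) → α → E) {C : ℝ} (hC : 0 ≤ C)
    (hmem : ∀ f : Lp E p μ, MemLp (T f) p μ)
    (hadd : ∀ f g : Lp E p μ, T ⇑(f + g) =ᵐ[μ] T f + T g)
    (hsmul : ∀ (c : 𝕜) (f : Lp E p μ), T ⇑(c • f) =ᵐ[μ] c • T f)
    (hle : ∀ f : Lp E p μ, eLpNorm (T f) p μ ≤ ENNReal.ofReal C * eLpNorm f p μ) :
    ∃ S : Lp E p μ →L[𝕜] Lp E p μ, (∀ f, S f =ᵐ[μ] T f) ∧ ‖S‖ ≤ C := by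
  let S : Lp E p μ →ₗ[𝕜] Lp E p μ :=
    { toFun f := (hmem f).toLp
      map_add' f g := by rw [← MemLp.toLp_add]; exact MemLp.toLp_congr _ _ (hadd f g)
      map_smul' c f := by
        rw [RingHom.id_apply, ← MemLp.toLp_const_smul]
        exact MemLp.toLp_congr _ _ (hsmul c f) }
  have hS : ∀ f, ‖S f‖ ≤ C * ‖f‖ := fun f => by
    change ‖(hmem f).toLp‖ ≤ _
    rw [Lp.norm_toLp, Lp.norm_def, ← ENNReal.toReal_ofReal hC, ← ENNReal.toReal_mul]
    exact ENNReal.toReal_mono (ENNReal.mul_ne_top ofReal_ne_top (Lp.eLpNorm_ne_top f)) (hle f)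
  exact ⟨S.mkContinuous C hS, fun f => (hmem f).coeFn_toLp,
    LinearMap.mkContinuous_norm_le _ hC _⟩

section Hausdorff

variable {Ω ι : Type*} [MeasurableSpace Ω] [Fintype ι] {μ : Measure Ω} {K : Ω → ℂ}
  {A : Ω → Matrix ι ι ℝ}

variable (μ K A) in
noncomputable def hausdorffOp (g : (ι → ℝ) → ℂ) (x : ι → ℝ) : ℂ :=
  ∫ u, K u * g (A u *ᵥ x) ∂μ

theorem hausdorffOp_const_smul (c : ℂ) (g : (ι → ℝ) → ℂ) :
    hausdorffOp μ K A (c • g) = c • hausdorffOp μ K A g :=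
  funext fun x => by
    simp only [hausdorffOp, Pi.smul_apply, smul_eq_mul, mul_left_comm _ c, integral_const_mul]

theorem hausdorffOp_add_apply {g₁ g₂ : (ι → ℝ) → ℂ} {x : ι → ℝ}
    (h₁ : Integrable (fun u => K u * g₁ (A u *ᵥ x)) μ)
    (h₂ : Integrable (fun u => K u * g₂ (A u *ᵥ x)) μ) :
    hausdorffOp μ K A (g₁ + g₂) x = hausdorffOp μ K A g₁ x + hausdorffOp μ K A g₂ x := by
  simp only [hausdorffOp, Pi.add_apply, mul_add]
  exact integral_add h₁ h₂

theorem stronglyMeasurable_hausdorff_kernel (hK : Measurable K)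
    (hA : Measurable fun p : Ω × (ι → ℝ) => A p.1 *ᵥ p.2) {g : (ι → ℝ) → ℂ}
    (hg : StronglyMeasurable g) :
    StronglyMeasurable (Function.uncurry fun u x => K u * g (A u *ᵥ x)) :=
  (hK.comp measurable_fst).stronglyMeasurable.mul (hg.comp_measurable hA)

variable [DecidableEq ι]

variable (μ K A) in
noncomputable def hausdorffOpBound : ℝ≥0∞ :=
  ∫⁻ u, ‖K u‖ₑ * ENNReal.ofReal (|(A u).det| ^ (-(1:ℝ) / 2)) ∂μ

theorem lintegral_eLpNorm_hausdorff_kernel (hAdet : ∀ u, (A u).det ≠ 0)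
    {g : (ι → ℝ) → ℂ} (hg : MemLp g 2 volume) :
    ∫⁻ u, eLpNorm (fun x => K u * g (A u *ᵥ x)) 2 volume ∂μ
      = hausdorffOpBound μ K A * eLpNorm g 2 volume := by
  have hu : ∀ u, eLpNorm (fun x => K u * g (A u *ᵥ x)) 2 volume
      = ‖K u‖ₑ * ENNReal.ofReal (|(A u).det| ^ (-(1:ℝ) / 2)) * eLpNorm g 2 volume := fun u => by
    rw [show (fun x => K u * g (A u *ᵥ x)) = K u • fun x => g (A u *ᵥ x) from rfl,
      eLpNorm_const_smul, eLpNorm_comp_mulVec (hAdet u) ofNat_ne_top hg.1, toReal_ofNat,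
      mul_assoc]
  simp_rw [hu]
  exact lintegral_mul_const' _ _ hg.eLpNorm_ne_top

variable [SFinite μ]

theorem hausdorffOp_congr_ae (hA : Measurable fun p : Ω × (ι → ℝ) => A p.1 *ᵥ p.2)
    (hAdet : ∀ u, (A u).det ≠ 0) {g₁ g₂ : (ι → ℝ) → ℂ} (h : g₁ =ᵐ[volume] g₂) :
    hausdorffOp μ K A g₁ =ᵐ[volume] hausdorffOp μ K A g₂ := by
  have hq : Measure.QuasiMeasurePreserving (fun p : (ι → ℝ) × Ω => A p.2 *ᵥ p.1)
      (volume.prod μ) volume :=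
    QuasiMeasurePreserving.prod_of_left (hA.comp measurable_swap)
      (.of_forall fun u => quasiMeasurePreserving_mulVec (hAdet u))
  filter_upwards [Measure.ae_ae_of_ae_prod (hq.ae_eq h)] with x hx
  exact integral_congr_ae (hx.mono fun u hu => congrArg (K u * ·) hu)

theorem eLpNorm_hausdorffOp_le (hK : Measurable K)
    (hA : Measurable fun p : Ω × (ι → ℝ) => A p.1 *ᵥ p.2) (hAdet : ∀ u, (A u).det ≠ 0)
    {g : (ι → ℝ) → ℂ} (hgm : StronglyMeasurable g) (hg : MemLp g 2 volume) :
    eLpNorm (hausdorffOp μ K A g) 2 volume ≤ hausdorffOpBound μ K A * eLpNorm g 2 volume :=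
  lintegral_eLpNorm_hausdorff_kernel hAdet hg ▸
    eLpNorm_two_integral_le (stronglyMeasurable_hausdorff_kernel hK hA hgm)

theorem ae_integrable_hausdorff_kernel (hK : Measurable K)
    (hA : Measurable fun p : Ω × (ι → ℝ) => A p.1 *ᵥ p.2) (hAdet : ∀ u, (A u).det ≠ 0)
    (hbound : hausdorffOpBound μ K A ≠ ∞) {g : (ι → ℝ) → ℂ} (hgm : StronglyMeasurable g)
    (hg : MemLp g 2 volume) :
    ∀ᵐ x ∂volume, Integrable (fun u => K u * g (A u *ᵥ x)) μ :=
  ae_integrable_of_lintegral_eLpNorm_two_ne_top (stronglyMeasurable_hausdorff_kernel hK hA hgm)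
    (by rw [lintegral_eLpNorm_hausdorff_kernel hAdet hg]; exact mul_ne_top hbound hg.eLpNorm_ne_top)

theorem memLp_hausdorffOp (hK : Measurable K)
    (hA : Measurable fun p : Ω × (ι → ℝ) => A p.1 *ᵥ p.2) (hAdet : ∀ u, (A u).det ≠ 0)
    (hbound : hausdorffOpBound μ K A ≠ ∞) {g : (ι → ℝ) → ℂ} (hgm : StronglyMeasurable g)
    (hg : MemLp g 2 volume) :
    MemLp (hausdorffOp μ K A g) 2 volume :=
  ⟨((stronglyMeasurable_hausdorff_kernel hK hA hgm).comp_measurable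
      measurable_swap).integral_prod_right'.aestronglyMeasurable,
    (eLpNorm_hausdorffOp_le hK hA hAdet hgm hg).trans_lt (mul_lt_top hbound.lt_top hg.2)⟩

theorem hausdorffOp_coeFn_add (hK : Measurable K)
    (hA : Measurable fun p : Ω × (ι → ℝ) => A p.1 *ᵥ p.2) (hAdet : ∀ u, (A u).det ≠ 0)
    (hbound : hausdorffOpBound μ K A ≠ ∞) (f g : Lp ℂ 2 (volume : Measure (ι → ℝ))) :
    hausdorffOp μ K A ⇑(f + g) =ᵐ[volume] hausdorffOp μ K A f + hausdorffOp μ K A g := by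
  filter_upwards [hausdorffOp_congr_ae (μ := μ) (K := K) hA hAdet (Lp.coeFn_add f g),
    ae_integrable_hausdorff_kernel hK hA hAdet hbound (Lp.stronglyMeasurable f) (Lp.memLp f),
    ae_integrable_hausdorff_kernel hK hA hAdet hbound (Lp.stronglyMeasurable g) (Lp.memLp g)]
    with x hx hf hg
  rw [hx, Pi.add_apply, hausdorffOp_add_apply hf hg]

end Hausdorff

/-- The multidimensional Hausdorff operator is bounded on L²(ℝⁿ) with norm at most
`∫ |K u| * |det A u|^(-1/2) dμ`. -/
theorem hausdorff_multidim_bounded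
    {Ω : Type*} [MeasurableSpace Ω] (μ : Measure Ω) [SigmaFinite μ] {n : ℕ}
    (K : Ω → ℂ) (hK : Measurable K)
    (A : Ω → Matrix (Fin n) (Fin n) ℝ) (hA : ∀ i j, Measurable fun u => A u i j)
    (hAinv : ∀ u, (A u).det ≠ 0)
    (hint : Integrable (fun u => ‖K u‖ * |(A u).det| ^ (-(1:ℝ)/2)) μ) :
    ∃ T : Lp ℂ 2 (volume : Measure (Fin n → ℝ)) →L[ℂ] Lp ℂ 2 (volume : Measure (Fin n → ℝ)),
      (∀ f : Lp ℂ 2 (volume : Measure (Fin n → ℝ)),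
        (T f : (Fin n → ℝ) → ℂ) =ᵐ[volume]
          fun x => ∫ u, K u * (f : (Fin n → ℝ) → ℂ) ((A u).mulVec x) ∂μ) ∧
      ‖T‖ ≤ ∫ u, ‖K u‖ * |(A u).det| ^ (-(1:ℝ)/2) ∂μ := by
  have hAm : Measurable fun p : Ω × (Fin n → ℝ) => A p.1 *ᵥ p.2 :=
    measurable_pi_lambda _ fun i => by simp only [mulVec, dotProduct]; fun_prop
  have hbound : hausdorffOpBound μ K A
      = ENNReal.ofReal (∫ u, ‖K u‖ * |(A u).det| ^ (-(1:ℝ)/2) ∂μ) := by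
    rw [hausdorffOpBound,
      ofReal_integral_eq_lintegral_ofReal hint (.of_forall fun u => by positivity)]
    simp_rw [ENNReal.ofReal_mul (norm_nonneg _), ofReal_norm]
  have hbound_ne_top : hausdorffOpBound μ K A ≠ ∞ := hbound ▸ ofReal_ne_top
  exact Lp.exists_continuousLinearMap_of_eLpNorm_le (hausdorffOp μ K A)
    (integral_nonneg fun u => by positivity)
    (fun f => memLp_hausdorffOp hK hAm hAinv hbound_ne_top (Lp.stronglyMeasurable f) (Lp.memLp f))
    (hausdorffOp_coeFn_add hK hAm hAinv hbound_ne_top)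
    (fun c f => (hausdorffOp_congr_ae hAm hAinv (Lp.coeFn_smul c f)).trans
      (hausdorffOp_const_smul c f).eventuallyEq)
    (fun f => hbound ▸ eLpNorm_hausdorffOp_le hK hAm hAinv (Lp.stronglyMeasurable f) (Lp.memLp f))
end

section
/- If (A(u))_{u∈Ω} is a commuting family of invertible real n×n matrices and ∫ |K(u)| |det A(u)|^(-1/2) dμ(u) < ∞, then the Hausdorff operator H_{K,A} on L²(ℝⁿ) is a normal operator, i.e., H H* = H* H. -/
/-!
Write `C_M f = f ∘ M` for the composition operator of an invertible matrix `M` on `L²(ℝⁿ)`.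
A linear change of variables gives `‖C_M f‖ = |det M|^(-1/2) ‖f‖` and
`⟪f, C_M g⟫ = |det M|⁻¹ ⟪C_{M⁻¹} f, g⟫`, and Fubini (integrable thanks to the first identity and
the hypothesis on `K`) gives `⟪h, H p⟫ = ∫ K(u) ⟪h, C_{A(u)} p⟫ dμ(u)`.
Expanding `⟪H f, H g⟫` and `⟪H* f, H* g⟫ = ⟪f, H H* g⟫` with these rules, both become
`∫∫ K(v) conj K(u) ⟪C_{A(u)} f, C_{A(v)} g⟫ dμ(u) dμ(v)`; for `H*` this needs
`C_{A(v)} C_{A(u)⁻¹} = C_{A(u)⁻¹} C_{A(v)}`, which is where commutativity of the family enters.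
-/

open MeasureTheory Matrix
open scoped ENNReal ComplexConjugate InnerProductSpace

theorem MeasureTheory.L2.integral_norm_inner_le {α 𝕜 E : Type*} [MeasurableSpace α]
    {μ : Measure α} [RCLike 𝕜] [NormedAddCommGroup E] [InnerProductSpace 𝕜 E]
    (f g : α →₂[μ] E) : ∫ x, ‖⟪f x, g x⟫_𝕜‖ ∂μ ≤ ‖f‖ * ‖g‖ := by
  have holder := eLpNorm_le_eLpNorm_mul_eLpNorm'_of_norm (p := 2) (q := 2) (r := 1)
    (Lp.aestronglyMeasurable f) (Lp.aestronglyMeasurable g) (fun a b => ⟪a, b⟫_𝕜) 1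
    (ae_of_all _ fun x => by simpa using norm_inner_le_norm (𝕜 := 𝕜) (f x) (g x))
  rw [ENNReal.coe_one, one_mul] at holder
  rw [Lp.norm_def, Lp.norm_def, ← ENNReal.toReal_mul,
    integral_norm_eq_lintegral_enorm
      ((Lp.aestronglyMeasurable f).inner (Lp.aestronglyMeasurable g)),
    ← eLpNorm_one_eq_lintegral_enorm]
  exact ENNReal.toReal_mono (ENNReal.mul_ne_top (Lp.eLpNorm_ne_top f) (Lp.eLpNorm_ne_top g)) holder

namespace Matrix.GeneralLinearGroup

variable {n : ℕ} (M N : GL (Fin n) ℝ)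

theorem measurableEmbedding_mulVec :
    MeasurableEmbedding fun x : Fin n → ℝ => (M : Matrix (Fin n) (Fin n) ℝ) *ᵥ x := by
  convert (LinearMap.GeneralLinearGroup.toLinearEquiv (toLin M)).toContinuousLinearEquiv
    |>.toHomeomorph.measurableEmbedding using 1
  ext x
  simp [toLin]

theorem map_mulVec_volume :
    volume.map (fun x : Fin n → ℝ => (M : Matrix (Fin n) (Fin n) ℝ) *ᵥ x)
      = ENNReal.ofReal |(M : Matrix (Fin n) (Fin n) ℝ).det|⁻¹ • volume := by
  rw [← abs_inv]
  exact Real.map_matrix_volume_pi_eq_smul_volume_pi M.det_ne_zero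

theorem quasiMeasurePreserving_mulVec :
    Measure.QuasiMeasurePreserving (fun x : Fin n → ℝ => (M : Matrix (Fin n) (Fin n) ℝ) *ᵥ x)
      volume volume :=
  ⟨(measurableEmbedding_mulVec M).measurable, by
    rw [map_mulVec_volume]; exact Measure.smul_absolutelyContinuous⟩

theorem integral_comp_mulVec {E : Type*} [NormedAddCommGroup E] [NormedSpace ℝ E]
    (φ : (Fin n → ℝ) → E) :
    ∫ x, φ ((M : Matrix (Fin n) (Fin n) ℝ) *ᵥ x)
      = |(M : Matrix (Fin n) (Fin n) ℝ).det|⁻¹ • ∫ x, φ x := by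
  rw [← (measurableEmbedding_mulVec M).integral_map, map_mulVec_volume, integral_smul_measure,
    ENNReal.toReal_ofReal (by positivity)]

variable {E : Type*} [NormedAddCommGroup E] {p : ℝ≥0∞}

theorem eLpNorm_comp_mulVec (f : (Fin n → ℝ) → E) :
    eLpNorm (fun x => f ((M : Matrix (Fin n) (Fin n) ℝ) *ᵥ x)) p volume
      = ENNReal.ofReal |(M : Matrix (Fin n) (Fin n) ℝ).det|⁻¹ ^ (1 / p).toReal
        * eLpNorm f p volume := by
  rw [← smul_eq_mul, ← eLpNorm_smul_measure_of_ne_zero (by simpa using M.det_ne_zero),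
    ← map_mulVec_volume, (measurableEmbedding_mulVec M).eLpNorm_map_measure]
  rfl

theorem memLp_comp_mulVec {f : (Fin n → ℝ) → E} (hf : MemLp f p volume) :
    MemLp (fun x => f ((M : Matrix (Fin n) (Fin n) ℝ) *ᵥ x)) p volume := by
  rw [← Function.comp_def, ← (measurableEmbedding_mulVec M).memLp_map_measure_iff,
    map_mulVec_volume]
  exact hf.smul_measure ENNReal.ofReal_ne_top

noncomputable def compMulVec (f : Lp E p (volume : Measure (Fin n → ℝ))) :
    Lp E p (volume : Measure (Fin n → ℝ)) :=
  (memLp_comp_mulVec M (Lp.memLp f)).toLp _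

theorem coeFn_compMulVec (f : Lp E p (volume : Measure (Fin n → ℝ))) :
    compMulVec M f =ᵐ[volume] fun x => f ((M : Matrix (Fin n) (Fin n) ℝ) *ᵥ x) :=
  MemLp.coeFn_toLp _

theorem norm_compMulVec (f : Lp E p (volume : Measure (Fin n → ℝ))) :
    ‖compMulVec M f‖ = |(M : Matrix (Fin n) (Fin n) ℝ).det| ^ (-p.toReal⁻¹) * ‖f‖ := by
  rw [compMulVec, Lp.norm_toLp, eLpNorm_comp_mulVec, ENNReal.toReal_mul, Lp.norm_def,
    ← ENNReal.toReal_rpow, ENNReal.toReal_ofReal (by positivity), Real.inv_rpow (abs_nonneg _),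
    ← Real.rpow_neg (abs_nonneg _), one_div, ENNReal.toReal_inv]

theorem compMulVec_compMulVec (f : Lp E p (volume : Measure (Fin n → ℝ))) :
    compMulVec M (compMulVec N f) = compMulVec (N * M) f := by
  ext1
  filter_upwards [coeFn_compMulVec M (compMulVec N f),
    (quasiMeasurePreserving_mulVec M).ae_eq_comp (coeFn_compMulVec N f),
    coeFn_compMulVec (N * M) f] with x hMN hN hNM
  rw [hMN, hNM, coe_mul, ← mulVec_mulVec]
  exact hN

variable {𝕜 F : Type*} [RCLike 𝕜] [NormedAddCommGroup F] [InnerProductSpace 𝕜 F]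

theorem inner_compMulVec_right (f g : (Fin n → ℝ) →₂[volume] F) :
    ⟪f, compMulVec M g⟫_𝕜
      = ((|(M : Matrix (Fin n) (Fin n) ℝ).det|⁻¹ : ℝ) : 𝕜) * ⟪compMulVec M⁻¹ f, g⟫_𝕜 := by
  let φ y := ⟪f ((M⁻¹ : GL (Fin n) ℝ) *ᵥ y), g y⟫_𝕜
  calc ⟪f, compMulVec M g⟫_𝕜
      = ∫ x, φ ((M : Matrix (Fin n) (Fin n) ℝ) *ᵥ x) := by
        rw [L2.inner_def]
        refine integral_congr_ae ?_
        filter_upwards [coeFn_compMulVec M g] with x hx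
        rw [hx]
        dsimp only [φ]
        rw [mulVec_mulVec, ← coe_mul, inv_mul_cancel, coe_one, one_mulVec]
    _ = ((|(M : Matrix (Fin n) (Fin n) ℝ).det|⁻¹ : ℝ) : 𝕜) * ∫ y, φ y := by
        rw [integral_comp_mulVec M φ, RCLike.real_smul_eq_coe_mul]
    _ = ((|(M : Matrix (Fin n) (Fin n) ℝ).det|⁻¹ : ℝ) : 𝕜) * ⟪compMulVec M⁻¹ f, g⟫_𝕜 := by
        rw [L2.inner_def]
        refine congrArg _ (integral_congr_ae ?_)
        filter_upwards [coeFn_compMulVec M⁻¹ f] with y hy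
        rw [hy]

theorem inner_compMulVec_compMulVec_of_commute (h : Commute M N)
    (f g : (Fin n → ℝ) →₂[volume] F) :
    ⟪compMulVec N f, compMulVec M g⟫_𝕜
      = ((|(M : Matrix (Fin n) (Fin n) ℝ).det|⁻¹ : ℝ) : 𝕜)
        * ⟪compMulVec N (compMulVec M⁻¹ f), g⟫_𝕜 := by
  rw [inner_compMulVec_right, compMulVec_compMulVec, compMulVec_compMulVec, h.inv_left.eq]

end Matrix.GeneralLinearGroup

section HausdorffOperator

open GeneralLinearGroup

variable {n : ℕ} {𝕜 Ω : Type*} [RCLike 𝕜] [MeasurableSpace Ω] {μ : Measure Ω}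
  {K : Ω → 𝕜} {A : Ω → GL (Fin n) ℝ}

def IsHausdorffOperator (μ : Measure Ω) (K : Ω → 𝕜) (A : Ω → GL (Fin n) ℝ)
    (T : ((Fin n → ℝ) →₂[volume] 𝕜) → (Fin n → ℝ) →₂[volume] 𝕜) : Prop :=
  ∀ f, T f =ᵐ[volume] fun x => ∫ u, K u * f ((A u : Matrix (Fin n) (Fin n) ℝ) *ᵥ x) ∂μ

theorem quasiMeasurePreserving_mulVec_prod [SFinite μ]
    (hA : ∀ i j, Measurable fun u => (A u : Matrix (Fin n) (Fin n) ℝ) i j) :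
    Measure.QuasiMeasurePreserving
      (fun q : Ω × (Fin n → ℝ) => (A q.1 : Matrix (Fin n) (Fin n) ℝ) *ᵥ q.2)
      (μ.prod volume) volume := by
  have hmeas : Measurable fun q : Ω × (Fin n → ℝ) => (A q.1 : Matrix (Fin n) (Fin n) ℝ) *ᵥ q.2 :=
    measurable_pi_lambda _ fun i => by
      simp only [mulVec, dotProduct]
      exact Finset.measurable_sum _ fun j _ =>
        ((hA i j).comp measurable_fst).mul ((measurable_pi_apply j).comp measurable_snd)
  refine ⟨hmeas, Measure.AbsolutelyContinuous.mk fun s hs hs0 => ?_⟩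
  rw [Measure.map_apply hmeas hs, Measure.measure_prod_null (hmeas hs)]
  exact ae_of_all _ fun u => (quasiMeasurePreserving_mulVec (A u)).preimage_null hs0

theorem integrable_mul_inner_comp_mulVec [SFinite μ] (hK : AEStronglyMeasurable K μ)
    (hA : ∀ i j, Measurable fun u => (A u : Matrix (Fin n) (Fin n) ℝ) i j)
    (hint : Integrable (fun u => ‖K u‖ * |(A u : Matrix (Fin n) (Fin n) ℝ).det| ^ (-(1:ℝ)/2)) μ)
    (h p : (Fin n → ℝ) →₂[volume] 𝕜) :
    Integrable (fun q : Ω × (Fin n → ℝ) =>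
      K q.1 * ⟪h q.2, p ((A q.1 : Matrix (Fin n) (Fin n) ℝ) *ᵥ q.2)⟫_𝕜) (μ.prod volume) := by
  have hmeas : AEStronglyMeasurable (fun q : Ω × (Fin n → ℝ) =>
      K q.1 * ⟪h q.2, p ((A q.1 : Matrix (Fin n) (Fin n) ℝ) *ᵥ q.2)⟫_𝕜) (μ.prod volume) :=
    (hK.comp_quasiMeasurePreserving Measure.quasiMeasurePreserving_fst).mul <|
      ((Lp.aestronglyMeasurable h).comp_quasiMeasurePreserving
        Measure.quasiMeasurePreserving_snd).inner
      ((Lp.aestronglyMeasurable p).comp_quasiMeasurePreserving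
        (quasiMeasurePreserving_mulVec_prod hA))
  have hslice (u : Ω) : (fun x => ⟪h x, p ((A u : Matrix (Fin n) (Fin n) ℝ) *ᵥ x)⟫_𝕜)
      =ᵐ[volume] fun x => ⟪h x, compMulVec (A u) p x⟫_𝕜 := by
    filter_upwards [coeFn_compMulVec (A u) p] with x hx
    rw [hx]
  refine (integrable_prod_iff hmeas).2 ⟨ae_of_all _ fun u =>
    ((L2.integrable_inner h (compMulVec (A u) p)).congr (hslice u).symm).const_mul (K u), ?_⟩
  refine (hint.mul_const (‖h‖ * ‖p‖)).mono' hmeas.norm.integral_prod_right'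
    (ae_of_all _ fun u => ?_)
  calc ‖∫ x, ‖K u * ⟪h x, p ((A u : Matrix (Fin n) (Fin n) ℝ) *ᵥ x)⟫_𝕜‖‖
      = ‖K u‖ * ∫ x, ‖⟪h x, compMulVec (A u) p x⟫_𝕜‖ := by
        simp only [norm_mul, integral_const_mul, norm_norm,
          Real.norm_of_nonneg (integral_nonneg fun x => norm_nonneg _)]
        exact congrArg _ (integral_congr_ae ((hslice u).fun_comp norm))
    _ ≤ ‖K u‖ * (‖h‖ * ‖compMulVec (A u) p‖) := by
        gcongr; exact L2.integral_norm_inner_le h _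
    _ = ‖K u‖ * |(A u : Matrix (Fin n) (Fin n) ℝ).det| ^ (-(1:ℝ)/2) * (‖h‖ * ‖p‖) := by
        rw [norm_compMulVec]; norm_num; ring

theorem IsHausdorffOperator.inner_eq_integral [SFinite μ]
    {T : ((Fin n → ℝ) →₂[volume] 𝕜) → (Fin n → ℝ) →₂[volume] 𝕜}
    (hT : IsHausdorffOperator μ K A T) (hK : AEStronglyMeasurable K μ)
    (hA : ∀ i j, Measurable fun u => (A u : Matrix (Fin n) (Fin n) ℝ) i j)
    (hint : Integrable (fun u => ‖K u‖ * |(A u : Matrix (Fin n) (Fin n) ℝ).det| ^ (-(1:ℝ)/2)) μ)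
    (h p : (Fin n → ℝ) →₂[volume] 𝕜) :
    ⟪h, T p⟫_𝕜 = ∫ u, K u * ⟪h, compMulVec (A u) p⟫_𝕜 ∂μ :=
  calc ⟪h, T p⟫_𝕜
      = ∫ x, (∫ u, K u * ⟪h x, p ((A u : Matrix (Fin n) (Fin n) ℝ) *ᵥ x)⟫_𝕜 ∂μ) := by
        rw [L2.inner_def]
        refine integral_congr_ae ?_
        filter_upwards [hT p] with x hx
        simp only [hx, RCLike.inner_apply', ← integral_const_mul, mul_left_comm]
    _ = ∫ u, ∫ x, K u * ⟪h x, p ((A u : Matrix (Fin n) (Fin n) ℝ) *ᵥ x)⟫_𝕜 ∂volume ∂μ :=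
        (integral_integral_swap (integrable_mul_inner_comp_mulVec hK hA hint h p)).symm
    _ = ∫ u, K u * ⟪h, compMulVec (A u) p⟫_𝕜 ∂μ := by
        congr 1 with u
        rw [integral_const_mul, L2.inner_def]
        refine congrArg _ (integral_congr_ae ?_)
        filter_upwards [coeFn_compMulVec (A u) p] with x hx
        rw [hx]

theorem IsHausdorffOperator.inner_apply_apply [SFinite μ]
    {T : ((Fin n → ℝ) →₂[volume] 𝕜) → (Fin n → ℝ) →₂[volume] 𝕜}
    (hT : IsHausdorffOperator μ K A T) (hK : AEStronglyMeasurable K μ)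
    (hA : ∀ i j, Measurable fun u => (A u : Matrix (Fin n) (Fin n) ℝ) i j)
    (hint : Integrable (fun u => ‖K u‖ * |(A u : Matrix (Fin n) (Fin n) ℝ).det| ^ (-(1:ℝ)/2)) μ)
    (f g : (Fin n → ℝ) →₂[volume] 𝕜) :
    ⟪T f, T g⟫_𝕜
      = ∫ v, K v * ∫ u, conj (K u) * ⟪compMulVec (A u) f, compMulVec (A v) g⟫_𝕜 ∂μ ∂μ := by
  rw [hT.inner_eq_integral hK hA hint]
  congr 1 with v
  rw [← inner_conj_symm, hT.inner_eq_integral hK hA hint, ← integral_conj]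
  simp only [map_mul, inner_conj_symm]

theorem IsHausdorffOperator.inner_adjoint_apply_adjoint_apply [SFinite μ]
    {T : ((Fin n → ℝ) →₂[volume] 𝕜) →L[𝕜] (Fin n → ℝ) →₂[volume] 𝕜}
    (hT : IsHausdorffOperator μ K A T) (hK : AEStronglyMeasurable K μ)
    (hA : ∀ i j, Measurable fun u => (A u : Matrix (Fin n) (Fin n) ℝ) i j)
    (hint : Integrable (fun u => ‖K u‖ * |(A u : Matrix (Fin n) (Fin n) ℝ).det| ^ (-(1:ℝ)/2)) μ)
    (hcomm : ∀ u v, Commute (A u) (A v)) (f g : (Fin n → ℝ) →₂[volume] 𝕜) :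
    ⟪T.adjoint f, T.adjoint g⟫_𝕜
      = ∫ u, K u * ∫ v, conj (K v) * ⟪compMulVec (A v) f, compMulVec (A u) g⟫_𝕜 ∂μ ∂μ := by
  rw [ContinuousLinearMap.adjoint_inner_left, hT.inner_eq_integral hK hA hint]
  congr 1 with u
  rw [inner_compMulVec_right, ContinuousLinearMap.adjoint_inner_right, ← inner_conj_symm,
    hT.inner_eq_integral hK hA hint, ← integral_conj, ← integral_const_mul]
  congr 2 with v
  simp only [map_mul, inner_conj_symm]
  rw [inner_compMulVec_compMulVec_of_commute _ _ (hcomm u v)]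
  ring

end HausdorffOperator

/-- If the matrices `A u` form a commuting family, the Hausdorff operator on L²(ℝⁿ)
is normal: `H H* = H* H`. -/
theorem hausdorff_normal
    {Ω : Type*} [MeasurableSpace Ω] (μ : Measure Ω) [SigmaFinite μ] {n : ℕ}
    (K : Ω → ℂ) (hK : Measurable K)
    (A : Ω → Matrix (Fin n) (Fin n) ℝ) (hA : ∀ i j, Measurable fun u => A u i j)
    (hAinv : ∀ u, (A u).det ≠ 0)
    (hcomm : ∀ u v, A u * A v = A v * A u)
    (hint : Integrable (fun u => ‖K u‖ * |(A u).det| ^ (-(1:ℝ)/2)) μ)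
    (T : Lp ℂ 2 (volume : Measure (Fin n → ℝ)) →L[ℂ] Lp ℂ 2 (volume : Measure (Fin n → ℝ)))
    (hT : ∀ f : Lp ℂ 2 (volume : Measure (Fin n → ℝ)),
      (T f : (Fin n → ℝ) → ℂ) =ᵐ[volume]
        fun x => ∫ u, K u * (f : (Fin n → ℝ) → ℂ) ((A u).mulVec x) ∂μ) :
    T.comp (ContinuousLinearMap.adjoint T) = (ContinuousLinearMap.adjoint T).comp T := by
  let B u : GL (Fin n) ℝ := GeneralLinearGroup.mkOfDetNeZero (A u) (hAinv u)
  have hB : IsHausdorffOperator μ K B T := hT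
  have hBcomm u v : Commute (B u) (B v) := Units.ext (hcomm u v)
  refine ContinuousLinearMap.ext fun f => ext_inner_right ℂ fun g => ?_
  rw [ContinuousLinearMap.comp_apply, ContinuousLinearMap.comp_apply,
    ContinuousLinearMap.adjoint_inner_left, ← ContinuousLinearMap.adjoint_inner_right T,
    hB.inner_adjoint_apply_adjoint_apply hK.aestronglyMeasurable hA hint hBcomm,
    hB.inner_apply_apply hK.aestronglyMeasurable hA hint]
end

section
/- Let Φ : ℝⁿ → Mat_m(ℂ) be continuous and bounded, and suppose the set E(λ) = {s ∈ ℝⁿ : det(λI − Φ(s)) = 0} has positive Lebesgue measure. Then λ is an eigenvalue of the multiplication operator M_Φ on L²(ℝⁿ; ℂᵐ). -/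
/-!
If `A = λ - Φ(s)` is singular, choose a nonsingular minor of `A` of maximal size `r` and add one
more column: the signed `r × r` minors obtained by deleting one of these `r + 1` columns form a
nonzero kernel vector of `A` (Laplace expansion gives `(r + 1)`-minors, which all vanish). This
vector is a polynomial in the entries of `A`, so for each of the finitely many choices of rows
and columns it depends continuously on `s`, and one choice works on a set of positive measure.
Normalised and cut down to a piece of finite measure, it is an `L²` eigenfunction of `M_Φ`.
-/

open MeasureTheory Matrix

namespace Matrix

variable {R : Type*} [CommRing R] {m r : ℕ}

def minorCofactorVec (A : Matrix (Fin m) (Fin m) R) (I : Fin r → Fin m)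
    (J : Fin (r + 1) → Fin m) : Fin m → R :=
  ∑ k, Pi.single (J k) ((-1) ^ (k : ℕ) * (A.submatrix I (J ∘ k.succAbove)).det)

theorem mulVec_minorCofactorVec (A : Matrix (Fin m) (Fin m) R) (I : Fin r → Fin m)
    (J : Fin (r + 1) → Fin m) (i : Fin m) :
    (A *ᵥ A.minorCofactorVec I J) i = (A.submatrix (Fin.cons i I) J).det := by
  rw [det_succ_row_zero, minorCofactorVec, mulVec_sum, Finset.sum_apply]
  refine Finset.sum_congr rfl fun k _ => ?_
  simp only [mulVec_single, Pi.smul_apply, col_apply, op_smul_eq_mul, submatrix_apply,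
    Fin.cons_zero, submatrix_submatrix, Fin.cons_comp_succ]
  ring

variable [Nontrivial R]

theorem exists_maximal_nonsingular_minor {A : Matrix (Fin m) (Fin m) R} (hA : A.det = 0) :
    ∃ r < m, ∃ I J : Fin r → Fin m, I.Injective ∧ J.Injective ∧ (A.submatrix I J).det ≠ 0 ∧
      ∀ I' J' : Fin (r + 1) → Fin m, I'.Injective → J'.Injective →
        (A.submatrix I' J').det = 0 := by
  classical
  let P : ℕ → Prop := fun r => ∃ I J : Fin r → Fin m,
    I.Injective ∧ J.Injective ∧ (A.submatrix I J).det ≠ 0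
  have hP0 : P 0 := ⟨Fin.elim0, Fin.elim0, fun a => a.elim0, fun a => a.elim0, by simp⟩
  have hPm : ¬ P m := by
    rintro ⟨I, J, hI, hJ, hdet⟩
    let σ := Equiv.ofBijective I (Finite.injective_iff_bijective.mp hI)
    let τ := Equiv.ofBijective J (Finite.injective_iff_bijective.mp hJ)
    have hperm : A.submatrix I J = (A.submatrix id τ).submatrix σ id := rfl
    rw [hperm, det_permute, det_permute', hA] at hdet
    simp at hdet
  have hr := Nat.findGreatest_spec (Nat.zero_le m) hP0
  have hrm : Nat.findGreatest P m < m := (Nat.findGreatest_le m).lt_of_ne fun h => hPm (h ▸ hr)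
  obtain ⟨I, J, hI, hJ, hdet⟩ := hr
  refine ⟨_, hrm, I, J, hI, hJ, hdet, fun I' J' hI' hJ' => ?_⟩
  by_contra h
  exact Nat.findGreatest_is_greatest (Nat.lt_succ_self _) hrm ⟨I', J', hI', hJ', h⟩

theorem exists_mulVec_minorCofactorVec_eq_zero {A : Matrix (Fin m) (Fin m) R}
    (hA : A.det = 0) : ∃ r < m, ∃ (I : Fin r → Fin m) (J : Fin (r + 1) → Fin m),
      A *ᵥ A.minorCofactorVec I J = 0 ∧ A.minorCofactorVec I J ≠ 0 := by
  obtain ⟨r, hrm, I, J₀, hI, hJ₀, hdet, hmax⟩ := exists_maximal_nonsingular_minor hA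
  obtain ⟨j, hj⟩ : ∃ j, j ∉ Set.range J₀ := by
    by_contra! h
    have hcard : m ≤ r := by simpa using Fintype.card_le_of_surjective J₀ h
    omega
  have hJ : (Fin.snoc J₀ j : Fin (r + 1) → Fin m).Injective :=
    Fin.snoc_injective_iff.mpr ⟨hJ₀, hj⟩
  refine ⟨r, hrm, I, Fin.snoc J₀ j, funext fun i => ?_, fun h => ?_⟩
  · rw [mulVec_minorCofactorVec]
    by_cases hi : i ∈ Set.range I
    · obtain ⟨l, rfl⟩ := hi
      exact det_zero_of_row_eq (Fin.succ_ne_zero l).symm (by ext; simp)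
    · exact hmax _ _ (Fin.cons_injective_iff.mpr ⟨hi, hI⟩) hJ
  · have hlast : (Fin.snoc J₀ j : Fin (r + 1) → Fin m) (Fin.last r) = j := Fin.snoc_last _ _
    have := congrFun h j
    rw [minorCofactorVec, Finset.sum_apply, Finset.sum_eq_single (Fin.last r)
      (fun k _ hk => Pi.single_eq_of_ne (fun e => hk (hJ (e.symm.trans hlast.symm))) _)
      (by simp), hlast, Pi.single_eq_same, Fin.succAbove_last, Fin.snoc_comp_castSucc] at this
    exact hdet (((isUnit_neg_one.pow _).mul_right_eq_zero).mp this)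

end Matrix

theorem Continuous.matrix_minorCofactorVec {X R : Type*} [TopologicalSpace X] [CommRing R]
    [TopologicalSpace R] [IsTopologicalRing R] {m r : ℕ} {A : X → Matrix (Fin m) (Fin m) R}
    (hA : Continuous A) (I : Fin r → Fin m) (J : Fin (r + 1) → Fin m) :
    Continuous fun x => (A x).minorCofactorVec I J :=
  continuous_finsetSum _ fun _ _ =>
    (continuous_single _).comp (continuous_const.mul (hA.matrix_submatrix _ _).matrix_det)

theorem exists_continuous_kernel_selection {X R : Type*} [TopologicalSpace X]
    [MeasurableSpace X] [OpensMeasurableSpace X] {μ : Measure X} [CommRing R] [Nontrivial R]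
    [TopologicalSpace R] [IsTopologicalRing R] [T2Space R] {m : ℕ}
    {A : X → Matrix (Fin m) (Fin m) R} (hA : Continuous A) (hdet : μ {x | (A x).det = 0} ≠ 0) :
    ∃ v : X → Fin m → R, Continuous v ∧ ∃ S : Set X, MeasurableSet S ∧ μ S ≠ 0 ∧
      ∀ x ∈ S, A x *ᵥ v x = 0 ∧ v x ≠ 0 := by
  let v : (Σ r : Fin m, (Fin r → Fin m) × (Fin (r + 1) → Fin m)) → X → Fin m → R :=
    fun c x => (A x).minorCofactorVec c.2.1 c.2.2
  have hv c : Continuous (v c) := hA.matrix_minorCofactorVec _ _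
  have hcover : {x | (A x).det = 0} ⊆ ⋃ c, {x | A x *ᵥ v c x = 0 ∧ v c x ≠ 0} := by
    intro x hx
    obtain ⟨r, hr, I, J, hker⟩ := Matrix.exists_mulVec_minorCofactorVec_eq_zero hx
    exact Set.mem_iUnion.mpr ⟨⟨⟨r, hr⟩, I, J⟩, hker⟩
  obtain ⟨c, hc⟩ := exists_measure_pos_of_not_measure_iUnion_null
    fun h => hdet (measure_mono_null hcover h)
  refine ⟨v c, hv c, _, ?_, hc.ne', fun x hx => hx⟩
  exact (isClosed_eq (hA.matrix_mulVec (hv c)) continuous_const).measurableSet.inter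
    (isClosed_eq (hv c) continuous_const).measurableSet.compl

theorem exists_Lp_ne_zero_ae_mem {X 𝕜 E : Type*} [MeasurableSpace X] {μ : Measure X}
    [SigmaFinite μ] [RCLike 𝕜] [NormedAddCommGroup E] [NormedSpace 𝕜 E] {p : ENNReal}
    {V : X → Submodule 𝕜 E} {w : X → E} (hw : AEStronglyMeasurable w μ) {S : Set X}
    (hS : MeasurableSet S) (hμS : μ S ≠ 0) (hwS : ∀ x ∈ S, w x ∈ V x ∧ w x ≠ 0) :
    ∃ f : Lp E p μ, f ≠ 0 ∧ ∀ᵐ x ∂μ, f x ∈ V x := by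
  obtain ⟨T, hT, hTS, hμT, hμT_lt_top⟩ :=
    Measure.exists_subset_measure_lt_top hS (pos_iff_ne_zero.mpr hμS)
  -- normalised, so that its indicator on a set of finite measure lies in every `Lp`
  let u : X → E := fun x => ((‖w x‖⁻¹ : ℝ) : 𝕜) • w x
  have hu : MemLp (T.indicator u) p μ := by
    rw [memLp_indicator_iff_restrict hT]
    have : IsFiniteMeasure (μ.restrict T) := ⟨by rwa [Measure.restrict_apply_univ]⟩
    refine MemLp.of_bound ((RCLike.continuous_ofReal.comp_aestronglyMeasurable
      hw.norm.aemeasurable.inv.aestronglyMeasurable).smul hw).restrict 1 (ae_of_all _ fun x => ?_)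
    simp only [u, norm_smul, RCLike.norm_ofReal, abs_inv, abs_norm]
    exact inv_mul_le_one_of_le₀ le_rfl (norm_nonneg _)
  refine ⟨hu.toLp _, fun h => ?_, ?_⟩
  · have h0 : T.indicator u =ᵐ[μ] 0 := hu.coeFn_toLp.symm.trans (h ▸ Lp.coeFn_zero _ _ _)
    refine hμT.ne' (measure_mono_null (fun x hxT => ?_) (ae_iff.mp h0))
    simpa [u, hxT] using (hwS x (hTS hxT)).2
  · filter_upwards [hu.coeFn_toLp] with x hx
    rw [hx]
    by_cases hxT : x ∈ T
    · simpa [hxT, u] using (V x).smul_mem _ (hwS x (hTS hxT)).1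
    · simp [hxT]

theorem matrix_mult_op_eigenvalue_general {n m : ℕ}
    (Φ : (Fin n → ℝ) → Matrix (Fin m) (Fin m) ℂ)
    (hΦc : ∀ i j, Continuous fun s => Φ s i j)
    (M : Lp (EuclideanSpace ℂ (Fin m)) 2 (volume : Measure (Fin n → ℝ)) →L[ℂ]
         Lp (EuclideanSpace ℂ (Fin m)) 2 (volume : Measure (Fin n → ℝ)))
    (hM : ∀ f : Lp (EuclideanSpace ℂ (Fin m)) 2 (volume : Measure (Fin n → ℝ)),
      ∀ᵐ s ∂(volume : Measure (Fin n → ℝ)), ∀ i : Fin m,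
        (M f : (Fin n → ℝ) → EuclideanSpace ℂ (Fin m)) s i
          = (Φ s).mulVec ((f : (Fin n → ℝ) → EuclideanSpace ℂ (Fin m)) s) i)
    (lam : ℂ)
    (hE : 0 < volume {s : Fin n → ℝ | (lam • (1 : Matrix (Fin m) (Fin m) ℂ) - Φ s).det = 0}) :
    ∃ f : Lp (EuclideanSpace ℂ (Fin m)) 2 (volume : Measure (Fin n → ℝ)),
      f ≠ 0 ∧ M f = lam • f := by
  obtain ⟨v, hv, S, hS, hμS, hvS⟩ := exists_continuous_kernel_selection
    (A := fun s => lam • 1 - Φ s) (continuous_const.sub (continuous_matrix hΦc)) hE.ne'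
  obtain ⟨f, hf0, hf⟩ := exists_Lp_ne_zero_ae_mem (p := 2)
    (V := fun s => Module.End.eigenspace (toEuclideanLin (Φ s)) lam)
    ((PiLp.continuous_toLp 2 _).comp hv).aestronglyMeasurable hS hμS fun s hs => by
      obtain ⟨hker, hne⟩ := hvS s hs
      rw [sub_mulVec, smul_mulVec, one_mulVec, sub_eq_zero] at hker
      simpa [Module.End.mem_eigenspace_iff, hne] using congr(WithLp.toLp 2 $hker.symm)
  refine ⟨f, hf0, Lp.ext ?_⟩
  filter_upwards [hM f, hf, Lp.coeFn_smul lam f] with s hMs hfs hsmul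
  ext i
  rw [hMs, hsmul]
  simpa using congr($(Module.End.mem_eigenspace_iff.mp hfs) i)

/-- If `E(λ) = {s : det(λ - Φ s) = 0}` has positive Lebesgue measure, then `λ` is an
eigenvalue of the multiplication operator `M_Φ` on L²(ℝⁿ; ℂᵐ). -/
theorem matrix_mult_op_eigenvalue {n m : ℕ}
    (Φ : (Fin n → ℝ) → Matrix (Fin m) (Fin m) ℂ)
    (hΦc : ∀ i j, Continuous fun s => Φ s i j) (C : ℝ) (hΦb : ∀ s i j, ‖Φ s i j‖ ≤ C)
    (M : Lp (EuclideanSpace ℂ (Fin m)) 2 (volume : Measure (Fin n → ℝ)) →L[ℂ]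
         Lp (EuclideanSpace ℂ (Fin m)) 2 (volume : Measure (Fin n → ℝ)))
    (hM : ∀ f : Lp (EuclideanSpace ℂ (Fin m)) 2 (volume : Measure (Fin n → ℝ)),
      ∀ᵐ s ∂(volume : Measure (Fin n → ℝ)), ∀ i : Fin m,
        (M f : (Fin n → ℝ) → EuclideanSpace ℂ (Fin m)) s i
          = (Φ s).mulVec ((f : (Fin n → ℝ) → EuclideanSpace ℂ (Fin m)) s) i)
    (lam : ℂ)
    (hE : 0 < volume {s : Fin n → ℝ | (lam • (1 : Matrix (Fin m) (Fin m) ℂ) - Φ s).det = 0}) :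
    ∃ f : Lp (EuclideanSpace ℂ (Fin m)) 2 (volume : Measure (Fin n → ℝ)),
      f ≠ 0 ∧ M f = lam • f :=
  matrix_mult_op_eigenvalue_general Φ hΦc M hM lam hE
end

section
/- For α > 0 and n ≥ 1, the function t ↦ |Γ(α+1)Γ(n/2 + it)/Γ(α + n/2 + it)| on ℝ attains its maximum at t = 0, with maximum value Γ(α+1)Γ(n/2)/Γ(α + n/2). -/
/-!
By Euler's beta integral, `Γ(u)Γ(v)/Γ(u+v) = ∫₀¹ x^(u-1) (1-x)^(v-1) dx` for `Re u, Re v > 0`.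
The integrand has modulus `x^(Re u - 1) (1-x)^(Re v - 1)`, so the triangle inequality for
integrals bounds `|Γ(u)Γ(v)/Γ(u+v)|` by the same ratio at `Re u, Re v`. Apply this with
`u = α`, `v = n/2 + it` and use `Γ(α+1) = αΓ(α)`.
-/

open Complex

namespace Complex

lemma norm_betaIntegrand {x : ℝ} (hx₀ : 0 < x) (hx₁ : x < 1) (u v : ℂ) :
    ‖(x : ℂ) ^ (u - 1) * (1 - (x : ℂ)) ^ (v - 1)‖ = x ^ (u.re - 1) * (1 - x) ^ (v.re - 1) := by
  rw [norm_mul, norm_cpow_eq_rpow_re_of_pos hx₀, ← ofReal_one, ← ofReal_sub,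
    norm_cpow_eq_rpow_re_of_pos (sub_pos.mpr hx₁)]
  simp

lemma betaIntegral_ofReal (a b : ℝ) :
    betaIntegral a b = ↑(∫ x in (0 : ℝ)..1, x ^ (a - 1) * (1 - x) ^ (b - 1)) := by
  rw [betaIntegral, ← intervalIntegral.integral_ofReal]
  refine intervalIntegral.integral_congr fun x hx => ?_
  rw [Set.uIcc_of_le zero_le_one] at hx
  push_cast
  rw [ofReal_cpow hx.1, ← ofReal_one, ← ofReal_sub, ofReal_cpow (sub_nonneg.mpr hx.2)]
  push_cast
  ring_nf

lemma norm_betaIntegral_le (u v : ℂ) : ‖betaIntegral u v‖ ≤ ‖betaIntegral u.re v.re‖ := by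
  have norm_eq : ∀ᵐ x : ℝ, x ∈ Set.uIoc 0 1 →
      ‖(x : ℂ) ^ (u - 1) * (1 - (x : ℂ)) ^ (v - 1)‖ = x ^ (u.re - 1) * (1 - x) ^ (v.re - 1) := by
    filter_upwards [MeasureTheory.Measure.ae_ne MeasureTheory.volume (1 : ℝ)] with x hx1 hx
    rw [Set.uIoc_of_le zero_le_one] at hx
    exact norm_betaIntegrand hx.1 (lt_of_le_of_ne hx.2 hx1) u v
  have real_integral_nonneg : 0 ≤ ∫ x in (0 : ℝ)..1, x ^ (u.re - 1) * (1 - x) ^ (v.re - 1) :=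
    intervalIntegral.integral_nonneg zero_le_one fun x hx =>
      mul_nonneg (Real.rpow_nonneg hx.1 _) (Real.rpow_nonneg (sub_nonneg.mpr hx.2) _)
  calc ‖betaIntegral u v‖
      ≤ ∫ x in (0 : ℝ)..1, ‖(x : ℂ) ^ (u - 1) * (1 - (x : ℂ)) ^ (v - 1)‖ :=
        intervalIntegral.norm_integral_le_integral_norm zero_le_one
    _ = ∫ x in (0 : ℝ)..1, x ^ (u.re - 1) * (1 - x) ^ (v.re - 1) :=
        intervalIntegral.integral_congr_ae norm_eq
    _ = ‖betaIntegral u.re v.re‖ := by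
        rw [betaIntegral_ofReal, norm_real, Real.norm_of_nonneg real_integral_nonneg]

theorem norm_Gamma_mul_Gamma_div_Gamma_le {u v : ℂ} (hu : 0 < u.re) (hv : 0 < v.re) :
    ‖Gamma u * Gamma v / Gamma (u + v)‖ ≤
      Real.Gamma u.re * Real.Gamma v.re / Real.Gamma (u.re + v.re) := by
  have hΓ : 0 ≤ Real.Gamma u.re * Real.Gamma v.re / Real.Gamma (u.re + v.re) :=
    (ProbabilityTheory.beta_pos hu hv).le
  have := norm_betaIntegral_le u v
  rwa [betaIntegral_eq_Gamma_mul_div _ _ hu hv,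
    betaIntegral_eq_Gamma_mul_div _ _ (by simpa using hu) (by simpa using hv),
    ← ofReal_add, Gamma_ofReal, Gamma_ofReal, Gamma_ofReal, ← ofReal_mul, ← ofReal_div,
    norm_real, Real.norm_of_nonneg hΓ] at this

end Complex

/-- The function `t ↦ |Γ(α+1)Γ(n/2+it)/Γ(α+n/2+it)|` attains its maximum at `t = 0`,
with maximum value `Γ(α+1)Γ(n/2)/Γ(α+n/2)`. -/
theorem gamma_ratio_max (α : ℝ) (hα : 0 < α) (n : ℕ) (hn : 1 ≤ n) :
    (∀ t : ℝ,
      ‖Complex.Gamma ((α : ℂ) + 1) * Complex.Gamma ((n / 2 : ℂ) + Complex.I * t) /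
          Complex.Gamma ((α : ℂ) + (n / 2 : ℂ) + Complex.I * t)‖
        ≤ Real.Gamma (α + 1) * Real.Gamma (n / 2) / Real.Gamma (α + n / 2)) ∧
    ‖Complex.Gamma ((α : ℂ) + 1) * Complex.Gamma ((n / 2 : ℂ) + Complex.I * (0:ℝ)) /
        Complex.Gamma ((α : ℂ) + (n / 2 : ℂ) + Complex.I * (0:ℝ))‖
      = Real.Gamma (α + 1) * Real.Gamma (n / 2) / Real.Gamma (α + n / 2) := by
  have hn₂ : (0 : ℝ) < n / 2 := by positivity
  refine ⟨fun t => ?_, ?_⟩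
  · have hv : 0 < ((n / 2 : ℂ) + I * t).re := by simpa using hn₂
    have hbound := norm_Gamma_mul_Gamma_div_Gamma_le (u := α) (by simpa using hα) hv
    rw [ofReal_re, show ((n / 2 : ℂ) + I * t).re = n / 2 by simp] at hbound
    rw [Complex.Gamma_add_one _ (ofReal_ne_zero.mpr hα.ne'), Real.Gamma_add_one hα.ne', add_assoc,
      mul_assoc (α : ℂ), mul_div_assoc (α : ℂ), norm_mul, norm_real, Real.norm_of_nonneg hα.le,
      mul_assoc α, mul_div_assoc α]
    exact mul_le_mul_of_nonneg_left hbound hα.le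
  · have := Real.Gamma_pos_of_pos (add_pos hα zero_lt_one)
    have := Real.Gamma_pos_of_pos hn₂
    have := Real.Gamma_pos_of_pos (add_pos hα hn₂)
    rw [ofReal_zero, mul_zero, add_zero, add_zero, ← ofReal_one, ← ofReal_add,
      show (n / 2 : ℂ) = ((n / 2 : ℝ) : ℂ) by push_cast; rfl, ← ofReal_add,
      Gamma_ofReal, Gamma_ofReal, Gamma_ofReal, ← ofReal_mul, ← ofReal_div, norm_real,
      Real.norm_of_nonneg (by positivity)]
end
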